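/- Let L be a Lie ring (equivalently, a Lie algebra over ℤ or over any commutative ring), let a, b, c ∈ L, and let i be a non-negative integer. Writing [x, c^j] for the left-normed iterated bracket [[…[[x, c], c], …], c] with j occurrences of c, the generalized Jacobi identity holds: [a, [b, c^i]] = Σ_{j=0}^{i} (−1)^j C(i, j) [[[a, c^j], b], c^{i−j}], where C(i, j) is the binomial coefficient acting by integer scalar multiplication on L. -/

import Mathlib

/-!
Right multiplication `D = ⁅·, c⁆` is a derivation, so `⁅a, D b⁆ = D ⁅a, b⁆ - ⁅D a, b⁆`: applying `D`
to the second argument is "`D` on the bracket" minus "`D` on the first argument", and these two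
operations commute. Expanding the `i`-th power of their difference binomially gives the identity,
which holds for every Lie derivation.
-/

/-- The left-normed iterated bracket `[x, c^j]`: `[x, c^0] = x` and
`[x, c^j] = [[x, c^{j−1}], c]`. -/
def iterBracket {L : Type*} [LieRing L] (x c : L) : ℕ → L
  | 0 => x
  | j + 1 => ⁅iterBracket x c j, c⁆

open Finset

namespace LieDerivation

variable {R L : Type*} [CommRing R] [LieRing L] [LieAlgebra R L]

theorem lie_apply_eq_sub (D : LieDerivation R L L) (a b : L) :
    ⁅a, D b⁆ = D ⁅a, b⁆ - ⁅D a, b⁆ :=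
  eq_sub_of_add_eq (D.apply_lie_eq_add a b).symm

theorem lie_iterate_apply (D : LieDerivation R L L) (n : ℕ) (a b : L) :
    ⁅a, D^[n] b⁆ = ∑ ij ∈ antidiagonal n,
      n.choose ij.1 • (-1 : ℤ) ^ ij.1 • D^[ij.2] ⁅D^[ij.1] a, b⁆ := by
  induction n generalizing a with
  | zero => simp
  | succ n ih =>
    rw [sum_antidiagonal_choose_succ_nsmul (M := L)
      (fun i j => (-1 : ℤ) ^ i • D^[j] ⁅D^[i] a, b⁆) n]
    simp only [Function.iterate_succ_apply', lie_apply_eq_sub, ih, map_sum, map_nsmul, map_zsmul,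
      pow_succ, mul_neg_one, neg_smul, smul_neg, sum_neg_distrib, sub_eq_add_neg]
    congr 2
    refine sum_congr rfl fun ⟨i, j⟩ hij ↦ ?_
    rw [n.choose_symm_of_eq_add (mem_antidiagonal.1 hij).symm, ← Function.iterate_succ_apply,
      Function.iterate_succ_apply']

end LieDerivation

-- `LieDerivation.inner ℤ L L c` is the derivation `x ↦ ⁅x, c⁆`.
theorem iterBracket_eq_iterate_inner {L : Type*} [LieRing L] (x c : L) (j : ℕ) :
    iterBracket x c j = (LieDerivation.inner ℤ L L c)^[j] x := by
  induction j with
  | zero => rfl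
  | succ j ih => rw [Function.iterate_succ_apply', ← ih]; rfl

/-- **The generalized Jacobi identity.**
In any Lie ring `L`, for `a b c ∈ L` and `i ≥ 0`:
`[a, [b, c^i]] = Σ_{j=0}^{i} (−1)^j C(i, j) [[[a, c^j], b], c^{i−j}]`. -/
theorem generalized_jacobi_identity
    {L : Type*} [LieRing L] (a b c : L) (i : ℕ) :
    ⁅a, iterBracket b c i⁆ =
      ∑ j ∈ Finset.range (i + 1),
        ((-1 : ℤ) ^ j * (i.choose j : ℤ)) •
          iterBracket ⁅iterBracket a c j, b⁆ c (i - j) := by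
  simp only [iterBracket_eq_iterate_inner, LieDerivation.lie_iterate_apply,
    Nat.sum_antidiagonal_eq_sum_range_succ_mk]
  refine sum_congr rfl fun j _ ↦ ?_
  rw [mul_comm, mul_smul, natCast_zsmul]
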